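/- arXiv:1905.06293 — 3 statements merged into one kernel-verified Lean document; each statement's English description precedes it below -/
import Mathlib

section
/- A connected finite simple graph G on at least two vertices satisfies pid(G) = 2 if and only if G is the join of graphs G₁ and G₂, where G₁ is isomorphic to K₁, to 2K₁ (two isolated vertices), or to K₂. -/
/-!
A function of weight `w ≤ 1` on at least two vertices labels some vertex `0`, whose
neighbourhood would need weight `2 > w`; so `pid G ≥ 2`. For a labelling of total weight
exactly `2`, a vertex labelled `0` can reach neighbourhood weight `2` only by seeing the
whole support, so such a labelling is a PID-function precisely when its support, of one or
two vertices, is joined to every other vertex.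
-/

open scoped Classical

/-- `f : V → ℕ` is a perfect Italian dominating function of `G`:
labels are in `{0,1,2}` and every vertex labeled `0` has neighbor labels summing to exactly `2`. -/
def IsPIDFun {V : Type*} [Fintype V] (G : SimpleGraph V) (f : V → ℕ) : Prop :=
  (∀ v, f v ≤ 2) ∧ ∀ v, f v = 0 → (∑ u, if G.Adj v u then f u else 0) = 2

/-- The perfect Italian domination number: minimum weight of a PID-function. -/
noncomputable def pid {V : Type*} [Fintype V] (G : SimpleGraph V) : ℕ :=
  sInf {w | ∃ f, IsPIDFun G f ∧ w = ∑ v, f v}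

open Finset

section Support

variable {ι : Type*}

lemma Finset.card_filter_ne_zero_le_sum (s : Finset ι) (f : ι → ℕ) :
    #{i ∈ s | f i ≠ 0} ≤ ∑ i ∈ s, f i :=
  calc #{i ∈ s | f i ≠ 0} = ∑ i ∈ s with f i ≠ 0, 1 := card_eq_sum_ones _
    _ ≤ ∑ i ∈ s with f i ≠ 0, f i :=
      sum_le_sum fun _ hi => Nat.one_le_iff_ne_zero.2 (mem_filter.1 hi).2
    _ = ∑ i ∈ s, f i := sum_filter_ne_zero s

variable [Fintype ι]

lemma card_filter_ne_zero_eq_one_or_two {f : ι → ℕ} (hsum : ∑ i, f i = 2) :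
    #{i | f i ≠ 0} = 1 ∨ #{i | f i ≠ 0} = 2 := by
  have hle := card_filter_ne_zero_le_sum univ f
  have hpos : #{i | f i ≠ 0} ≠ 0 := by
    rw [Ne, card_eq_zero, filter_eq_empty_iff]
    intro hzero
    simp_all
  omega

lemma exists_sum_eq_two_of_card_eq_one_or_two {S : Finset ι} (hS : #S = 1 ∨ #S = 2) :
    ∃ f : ι → ℕ, ∑ i, f i = 2 ∧ ∀ i, f i ≠ 0 ↔ i ∈ S := by
  refine ⟨fun i => if i ∈ S then 2 / #S else 0, ?_, fun i => ?_⟩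
  · rw [sum_ite_mem_eq, sum_const, smul_eq_mul]
    rcases hS with h | h <;> rw [h]
  · have : 2 / #S ≠ 0 := by rcases hS with h | h <;> rw [h] <;> decide
    by_cases hi : i ∈ S <;> simp [hi, this]

end Support

section PID

variable {V : Type*} [Fintype V] {G : SimpleGraph V} {f : V → ℕ}

lemma sum_adj_le_sum (v : V) : (∑ u, if G.Adj v u then f u else 0) ≤ ∑ u, f u :=
  sum_le_sum fun _ _ => by split_ifs <;> omega

lemma sum_adj_eq_sum_iff (v : V) :
    (∑ u, if G.Adj v u then f u else 0) = ∑ u, f u ↔ ∀ u, f u ≠ 0 → G.Adj v u := by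
  rw [sum_eq_sum_iff_of_le fun u _ => by split_ifs <;> omega]
  refine ⟨fun h u hu => ?_, fun h u _ => ?_⟩
  · by_contra hadj
    exact hu (by simpa [hadj] using (h u (mem_univ u)).symm)
  · by_cases hu : f u = 0
    · simp [hu]
    · rw [if_pos (h u hu)]

lemma isPIDFun_one : IsPIDFun G 1 :=
  ⟨fun _ => one_le_two, fun _ h => absurd h one_ne_zero⟩

lemma IsPIDFun.pid_le (hf : IsPIDFun G f) : pid G ≤ ∑ v, f v :=
  Nat.sInf_le ⟨f, hf, rfl⟩

lemma exists_isPIDFun_sum_eq_pid (G : SimpleGraph V) :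
    ∃ f, IsPIDFun G f ∧ ∑ v, f v = pid G := by
  obtain ⟨f, hf, hsum⟩ := Nat.sInf_mem (⟨_, 1, isPIDFun_one, rfl⟩ :
    {w | ∃ f, IsPIDFun G f ∧ w = ∑ v, f v}.Nonempty)
  exact ⟨f, hf, hsum.symm⟩

lemma IsPIDFun.two_le_sum (hf : IsPIDFun G f) (hcard : 2 ≤ Fintype.card V) :
    2 ≤ ∑ v, f v := by
  by_cases hzero : ∃ v, f v = 0
  · obtain ⟨v, hv⟩ := hzero
    exact hf.2 v hv ▸ sum_adj_le_sum v
  · calc 2 ≤ Fintype.card V := hcard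
      _ = ∑ _v : V, 1 := by rw [sum_const, card_univ, smul_eq_mul, mul_one]
      _ ≤ ∑ v, f v := sum_le_sum fun v _ => Nat.one_le_iff_ne_zero.2 fun hv => hzero ⟨v, hv⟩

lemma two_le_pid (hcard : 2 ≤ Fintype.card V) : 2 ≤ pid G := by
  obtain ⟨f, hf, hsum⟩ := exists_isPIDFun_sum_eq_pid G
  exact hsum ▸ hf.two_le_sum hcard

lemma pid_eq_two_iff_exists_isPIDFun_sum_eq_two (hcard : 2 ≤ Fintype.card V) :
    pid G = 2 ↔ ∃ f, IsPIDFun G f ∧ ∑ v, f v = 2 := by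
  refine ⟨fun h => ?_, fun ⟨f, hf, hsum⟩ => (hsum ▸ hf.pid_le).antisymm (two_le_pid hcard)⟩
  obtain ⟨f, hf, hsum⟩ := exists_isPIDFun_sum_eq_pid G
  exact ⟨f, hf, hsum.trans h⟩

lemma isPIDFun_iff_of_sum_eq_two (hsum : ∑ v, f v = 2) :
    IsPIDFun G f ↔ ∀ u v, f u ≠ 0 → f v = 0 → G.Adj u v := by
  have hle (v : V) : f v ≤ 2 := hsum ▸ single_le_sum (fun _ _ => Nat.zero_le _) (mem_univ v)
  refine ⟨fun hf u v hu hv => ?_, fun hadj => ⟨hle, fun v hv => ?_⟩⟩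
  · exact ((sum_adj_eq_sum_iff v).1 ((hf.2 v hv).trans hsum.symm) u hu).symm
  · rw [(sum_adj_eq_sum_iff v).2 fun u hu => (hadj u v hu hv).symm, hsum]

end PID

/-- `S` is the vertex set of `G₁`; a two-vertex `S` gives `2K₁` or `K₂` according to whether
its vertices are adjacent, and `G₂` is induced on the complement of `S`. -/
theorem pid_eq_two_iff_join_general {V : Type*} [Fintype V] (G : SimpleGraph V)
    (hcard : 2 ≤ Fintype.card V) :
    pid G = 2 ↔
      ∃ S : Finset V, (S.card = 1 ∨ S.card = 2) ∧ ∀ u ∈ S, ∀ v, v ∉ S → G.Adj u v := by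
  rw [pid_eq_two_iff_exists_isPIDFun_sum_eq_two hcard]
  constructor
  · rintro ⟨f, hf, hsum⟩
    refine ⟨({v | f v ≠ 0} : Finset V), card_filter_ne_zero_eq_one_or_two hsum, fun u hu v hv => ?_⟩
    rw [mem_filter] at hu hv
    exact (isPIDFun_iff_of_sum_eq_two hsum).1 hf u v hu.2 (by simpa using hv)
  · rintro ⟨S, hS, hadj⟩
    obtain ⟨f, hsum, hsupp⟩ := exists_sum_eq_two_of_card_eq_one_or_two hS
    refine ⟨f, (isPIDFun_iff_of_sum_eq_two hsum).2 fun u v hu hv => ?_, hsum⟩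
    exact hadj u ((hsupp u).1 hu) v fun hvS => (hsupp v).2 hvS hv

/-- A non-trivial connected graph `G` has `pid G = 2` precisely when `G` is the join
of `G₁` and `G₂` where `G₁` is `K₁`, `2K₁` or `K₂`.  Equivalently: there is a set `S`
of one or two vertices all of whose members are adjacent to every vertex outside `S`
(a one-vertex `S` gives `G₁ = K₁`; a two-vertex `S` gives `G₁ = 2K₁` or `G₁ = K₂`
according to whether its two vertices are adjacent, and `G₂` is induced on the rest). -/
theorem pid_eq_two_iff_join {V : Type*} [Fintype V] (G : SimpleGraph V)
    (hconn : G.Connected) (hcard : 2 ≤ Fintype.card V) :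
    pid G = 2 ↔
      ∃ S : Finset V, (S.card = 1 ∨ S.card = 2) ∧ ∀ u ∈ S, ∀ v, v ∉ S → G.Adj u v :=
  pid_eq_two_iff_join_general G hcard
end

section
/- For all integers n₁, n₂ ≥ 3, the complete bipartite graph K_{n₁,n₂} satisfies pid(K_{n₁,n₂}) = 4. -/
open scoped Classical

/-!
In `K_{n₁,n₂}` a vertex labeled `0` sees exactly the other side, so a labeling is a
PID-function iff each side containing a `0` has the opposite side summing to `2`.
Two `2`s, one on each side, therefore give weight `4`. Conversely, a side without a `0`
has weight at least its size `≥ 3`; hence either both sides contain a `0` and both weigh `2`,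
or the weight exceeds `4`.
-/

section pid

variable {V : Type*} [Fintype V] {G : SimpleGraph V}

theorem pid_le_of_isPIDFun {f : V → ℕ} (hf : IsPIDFun G f) : pid G ≤ ∑ v, f v :=
  Nat.sInf_le ⟨f, hf, rfl⟩

/-- The constant labeling `1` is a PID-function, so the `sInf` defining `pid` is over a nonempty set. -/
theorem le_pid_of_forall {k : ℕ} (h : ∀ f, IsPIDFun G f → k ≤ ∑ v, f v) : k ≤ pid G :=
  le_csInf ⟨_, fun _ ↦ 1, ⟨fun _ ↦ by norm_num, fun _ h ↦ absurd h one_ne_zero⟩, rfl⟩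
    (by rintro _ ⟨f, hf, rfl⟩; exact h f hf)

end pid

section completeBipartite

variable {α β : Type*} [Fintype α] [Fintype β]

theorem isPIDFun_completeBipartiteGraph_iff {f : α ⊕ β → ℕ} :
    IsPIDFun (completeBipartiteGraph α β) f ↔ (∀ v, f v ≤ 2) ∧
      (∀ a, f (.inl a) = 0 → ∑ b, f (.inr b) = 2) ∧
      (∀ b, f (.inr b) = 0 → ∑ a, f (.inl a) = 2) := by
  simp [IsPIDFun, Fintype.sum_sum_type]

theorem card_le_sum_of_forall_ne_zero {f : α → ℕ} (hf : ∀ a, f a ≠ 0) :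
    Fintype.card α ≤ ∑ a, f a := by
  rw [Fintype.card_eq_sum_ones]
  exact Finset.sum_le_sum fun a _ ↦ Nat.one_le_iff_ne_zero.mpr (hf a)

theorem sum_inr_eq_two_or_card_le_sum_inl {f : α ⊕ β → ℕ}
    (hf : IsPIDFun (completeBipartiteGraph α β) f) :
    ∑ b, f (.inr b) = 2 ∨ Fintype.card α ≤ ∑ a, f (.inl a) := by
  by_cases hzero : ∃ a, f (.inl a) = 0
  · obtain ⟨a, ha⟩ := hzero
    exact .inl ((isPIDFun_completeBipartiteGraph_iff.mp hf).2.1 a ha)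
  · exact .inr (card_le_sum_of_forall_ne_zero fun a ha ↦ hzero ⟨a, ha⟩)

theorem four_le_sum_of_isPIDFun (hα : 3 ≤ Fintype.card α) (hβ : 3 ≤ Fintype.card β)
    {f : α ⊕ β → ℕ} (hf : IsPIDFun (completeBipartiteGraph α β) f) : 4 ≤ ∑ v, f v := by
  have hB := sum_inr_eq_two_or_card_le_sum_inl hf
  have hA := sum_inr_eq_two_or_card_le_sum_inl
    (f := f ∘ Sum.swap) (by simpa [isPIDFun_completeBipartiteGraph_iff, and_comm] using hf)
  simp only [Function.comp_apply, Sum.swap_inl, Sum.swap_inr] at hA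
  rw [Fintype.sum_sum_type]
  omega

theorem isPIDFun_two_two (a : α) (b : β) :
    IsPIDFun (completeBipartiteGraph α β) (Sum.elim (Pi.single a 2) (Pi.single b 2)) := by
  refine isPIDFun_completeBipartiteGraph_iff.mpr ⟨?_, fun _ _ ↦ ?_, fun _ _ ↦ ?_⟩
  · rintro (a' | b') <;> simp [Pi.single_apply] <;> split <;> omega
  · simp [Finset.sum_pi_single']
  · simp [Finset.sum_pi_single']

theorem pid_completeBipartiteGraph (hα : 3 ≤ Fintype.card α) (hβ : 3 ≤ Fintype.card β) :
    pid (completeBipartiteGraph α β) = 4 := by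
  obtain ⟨a⟩ : Nonempty α := Fintype.card_pos_iff.mp (by omega)
  obtain ⟨b⟩ : Nonempty β := Fintype.card_pos_iff.mp (by omega)
  refine le_antisymm ?_ (le_pid_of_forall fun f ↦ four_le_sum_of_isPIDFun hα hβ)
  calc pid (completeBipartiteGraph α β)
      ≤ ∑ v, Sum.elim (Pi.single a 2) (Pi.single b 2) v :=
        pid_le_of_isPIDFun (isPIDFun_two_two a b)
    _ = 4 := by simp [Fintype.sum_sum_type, Finset.sum_pi_single']

end completeBipartite

/-- For all `n₁, n₂ ≥ 3`, the complete bipartite graph `K_{n₁,n₂}` has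
perfect Italian domination number `4`. -/
theorem pid_completeBipartite (n₁ n₂ : ℕ) (h₁ : 3 ≤ n₁) (h₂ : 3 ≤ n₂) :
    pid (completeBipartiteGraph (Fin n₁) (Fin n₂)) = 4 :=
  pid_completeBipartiteGraph (by simpa using h₁) (by simpa using h₂)
end

section
/- For every integer ℓ ≥ 6, let S_ℓ be the split graph of order n = ℓ + 2 obtained from the complete graph K_ℓ by choosing four distinct vertices a, b, c, d and adding two new vertices x and y together with the edges xa, xb, xc, and yd. Then pid(S_ℓ) = ℓ + 2 = n; consequently there are connected split graphs of arbitrarily large order n with pid equal to n. -/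
open scoped Classical

/-- The split graph `S_ℓ`: start from a clique `K_ℓ` (the vertices `Sum.inl i`),
pick four distinct vertices `a, b, c, d` of it (indices `0, 1, 2, 3`), and add two
new vertices `x = Sum.inr 0` and `y = Sum.inr 1` together with the edges
`xa, xb, xc` and `yd`. -/
def splitGraphS (ℓ : ℕ) : SimpleGraph (Fin ℓ ⊕ Fin 2) :=
  SimpleGraph.fromRel fun u v =>
    match u, v with
    | Sum.inl _, Sum.inl _ => True
    | Sum.inr x, Sum.inl i => (x = 0 ∧ i.val ≤ 2) ∨ (x = 1 ∧ i.val = 3)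
    | _, _ => False

/-!
Label every vertex `1` for the upper bound. Conversely, let `f` be a PID-function. If some clique
vertex had label `0`, the clique would carry weight exactly `2`, and chasing the conditions at
`a, b, c`, at `x`, at `d` and finally at `y` gives a contradiction. So the `ℓ` clique vertices all
have label at least `1`; then `x` cannot be `0` (it would see weight at least `3`), and if `y` is
`0` then `d` has label `2`. Either way the weight is at least `ℓ + 2`.
-/

namespace IsPIDFun

variable {V : Type*} [Fintype V] {G : SimpleGraph V} {f : V → ℕ}

theorem one : IsPIDFun G 1 :=
  ⟨fun _ => one_le_two, fun _ h => absurd h one_ne_zero⟩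

theorem sum_le_two (hf : IsPIDFun G f) {v : V} (hv : f v = 0) {s : Finset V}
    (hs : ∀ u ∈ s, u ≠ v → G.Adj v u) : ∑ u ∈ s, f u ≤ 2 := by
  calc ∑ u ∈ s, f u = ∑ u ∈ s, if G.Adj v u then f u else 0 := by
        refine Finset.sum_congr rfl fun u hu => ?_
        by_cases huv : u = v
        · simp [huv, hv]
        · simp [hs u hu huv]
    _ ≤ ∑ u, if G.Adj v u then f u else 0 :=
        Finset.sum_le_sum_of_subset (Finset.subset_univ s)
    _ = 2 := hf.2 v hv

theorem two_le_sum_s19 (hf : IsPIDFun G f) {v : V} (hv : f v = 0) {s : Finset V}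
    (hs : ∀ u, G.Adj v u → u ∈ s) : 2 ≤ ∑ u ∈ s, f u := by
  calc 2 = ∑ u, if G.Adj v u then f u else 0 := (hf.2 v hv).symm
    _ = ∑ u ∈ s, if G.Adj v u then f u else 0 :=
        (Finset.sum_subset (Finset.subset_univ s) fun u _ hu => if_neg (mt (hs u) hu)).symm
    _ ≤ ∑ u ∈ s, f u := Finset.sum_le_sum fun u _ => by split_ifs <;> simp

end IsPIDFun

theorem card_le_sum_of_pair {V : Type*} [Fintype V] {f : V → ℕ} {p q : V} (hpq : p ≠ q)
    (hpair : 2 ≤ f p + f q) (hrest : ∀ v, v ≠ p → v ≠ q → 1 ≤ f v) :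
    Fintype.card V ≤ ∑ v, f v := by
  have split (g : V → ℕ) : ∑ v, g v = g p + g q + ∑ v ∈ (Finset.univ.erase p).erase q, g v := by
    rw [add_assoc, Finset.add_sum_erase _ _ (Finset.mem_erase.2 ⟨hpq.symm, Finset.mem_univ q⟩),
      Finset.add_sum_erase _ _ (Finset.mem_univ p)]
  have hrest' : ∑ v ∈ (Finset.univ.erase p).erase q, 1 ≤ ∑ v ∈ (Finset.univ.erase p).erase q, f v :=
    Finset.sum_le_sum fun v hv => by
      simp only [Finset.mem_erase] at hv
      exact hrest v hv.2.1 hv.1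
  rw [← Finset.card_univ, Finset.card_eq_sum_ones, split, split f]
  omega

theorem pid_le_card {V : Type*} [Fintype V] (G : SimpleGraph V) : pid G ≤ Fintype.card V :=
  Nat.sInf_le ⟨1, IsPIDFun.one, by simp⟩

theorem le_pid {V : Type*} [Fintype V] {G : SimpleGraph V} {n : ℕ}
    (h : ∀ f, IsPIDFun G f → n ≤ ∑ v, f v) : n ≤ pid G :=
  le_csInf ⟨_, 1, IsPIDFun.one, rfl⟩ fun _ ⟨f, hf, hw⟩ => hw ▸ h f hf

namespace splitGraphS

open Sum

variable {ℓ : ℕ}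

@[simp] theorem adj_inl_inl {i j : Fin ℓ} : (splitGraphS ℓ).Adj (inl i) (inl j) ↔ i ≠ j := by
  simp [splitGraphS]

@[simp] theorem adj_inl_inr {i : Fin ℓ} {b : Fin 2} :
    (splitGraphS ℓ).Adj (inl i) (inr b) ↔ (b = 0 ∧ i.val ≤ 2) ∨ (b = 1 ∧ i.val = 3) := by
  simp [splitGraphS]

@[simp] theorem adj_inr_inl {i : Fin ℓ} {b : Fin 2} :
    (splitGraphS ℓ).Adj (inr b) (inl i) ↔ (b = 0 ∧ i.val ≤ 2) ∨ (b = 1 ∧ i.val = 3) := by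
  simp [splitGraphS]

@[simp] theorem not_adj_inr_inr {a b : Fin 2} : ¬ (splitGraphS ℓ).Adj (inr a) (inr b) := by
  simp [splitGraphS]

theorem isSplit : ∃ K : Set (Fin ℓ ⊕ Fin 2),
    (splitGraphS ℓ).IsClique K ∧ (splitGraphS ℓ)ᶜ.IsClique Kᶜ := by
  refine ⟨Set.range inl, ?_, ?_⟩
  · rintro _ ⟨i, rfl⟩ _ ⟨j, rfl⟩ hij
    exact adj_inl_inl.2 fun h => hij (congrArg inl h)
  · rw [Set.compl_range_inl]
    rintro _ ⟨a, rfl⟩ _ ⟨b, rfl⟩ hab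
    exact ⟨hab, not_adj_inr_inr⟩

theorem connected (hℓ : 4 ≤ ℓ) : (splitGraphS ℓ).Connected := by
  let a : Fin ℓ := ⟨0, by omega⟩
  have reach_a : ∀ v, (splitGraphS ℓ).Reachable v (inl a) := by
    have hda : (splitGraphS ℓ).Adj (inl ⟨3, by omega⟩) (inl a) := by simp [a, Fin.ext_iff]
    rintro (i | b)
    · by_cases h : i = a
      · exact h ▸ SimpleGraph.Reachable.refl _
      · exact (adj_inl_inl.2 h).reachable
    · fin_cases b
      · exact (adj_inr_inl.2 (Or.inl ⟨rfl, Nat.zero_le 2⟩)).reachable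
      · exact (adj_inr_inl.2 (Or.inr ⟨rfl, rfl⟩)).reachable.trans hda.reachable
  exact ⟨fun u v => (reach_a u).trans (reach_a v).symm⟩

/-- The clique vertices `a, b, c, d` of `S_ℓ` (indices `0, 1, 2, 3`) and two further ones, `4` and
`5`, that have no neighbour outside the clique. -/
def marked (hℓ : 6 ≤ ℓ) : Fin 6 ↪ Fin ℓ ⊕ Fin 2 :=
  (Fin.castLEEmb hℓ).trans Function.Embedding.inl

@[simp] theorem marked_apply (hℓ : 6 ≤ ℓ) (k : Fin 6) : marked hℓ k = inl (Fin.castLE hℓ k) :=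
  rfl

section lowerBound

variable {f : Fin ℓ ⊕ Fin 2 → ℕ}

theorem sum_marked_le_sum_inl (hℓ : 6 ≤ ℓ) : ∑ k, f (marked hℓ k) ≤ ∑ j, f (inl j) := by
  simpa using Finset.sum_le_sum_of_subset (f := fun j => f (inl j))
    (Finset.subset_univ (Finset.univ.map (Fin.castLEEmb hℓ)))

theorem sum_inl_le_two (hf : IsPIDFun (splitGraphS ℓ) f) {i : Fin ℓ} (hi : f (inl i) = 0) :
    ∑ j, f (inl j) ≤ 2 := by
  simpa using hf.sum_le_two hi (s := Finset.univ.map Function.Embedding.inl) (by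
    simp only [Finset.mem_map, Finset.mem_univ, true_and, Function.Embedding.inl_apply]
    rintro _ ⟨j, rfl⟩ hji
    exact adj_inl_inl.2 fun h => hji (h ▸ rfl))

theorem sum_inl_add_le_two (hf : IsPIDFun (splitGraphS ℓ) f) {i : Fin ℓ} (hi : f (inl i) = 0)
    {b : Fin 2} (hb : (splitGraphS ℓ).Adj (inl i) (inr b)) :
    ∑ j, f (inl j) + f (inr b) ≤ 2 := by
  simpa [add_comm] using hf.sum_le_two hi
    (s := insert (inr b) (Finset.univ.map Function.Embedding.inl)) (by
    simp only [Finset.mem_insert, Finset.mem_map, Finset.mem_univ, true_and,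
      Function.Embedding.inl_apply]
    rintro _ (rfl | ⟨j, rfl⟩) hji
    · exact hb
    · exact adj_inl_inl.2 fun h => hji (h ▸ rfl))

theorem two_le_sum_inl (hf : IsPIDFun (splitGraphS ℓ) f) {i : Fin ℓ} (hi : f (inl i) = 0)
    (hi4 : 4 ≤ i.val) : 2 ≤ ∑ j, f (inl j) := by
  simpa using hf.two_le_sum_s19 hi (s := Finset.univ.map Function.Embedding.inl) (by
    rintro (j | b) h
    · simp
    · simp at h; omega)

theorem marked_sum_eq_two_of_inr_zero (hℓ : 6 ≤ ℓ) (hf : IsPIDFun (splitGraphS ℓ) f) (hx : f (inr 0) = 0) :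
    f (marked hℓ 0) + f (marked hℓ 1) + f (marked hℓ 2) = 2 := by
  have hnbr : ∀ u, (splitGraphS ℓ).Adj (inr 0) u ↔ u ∈ ({0, 1, 2} : Finset (Fin 6)).map (marked hℓ) := by
    rintro (j | b)
    · simp [Fin.ext_iff]
      omega
    · simp
  have key := le_antisymm (hf.sum_le_two hx fun u hu _ => (hnbr u).2 hu)
    (hf.two_le_sum_s19 hx fun u hu => (hnbr u).1 hu)
  simpa [add_assoc] using key

theorem marked_three_eq_two_of_inr_one (hℓ : 6 ≤ ℓ) (hf : IsPIDFun (splitGraphS ℓ) f) (hy : f (inr 1) = 0) :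
    f (marked hℓ 3) = 2 := by
  have hnbr : ∀ u, (splitGraphS ℓ).Adj (inr 1) u ↔ u ∈ ({marked hℓ 3} : Finset _) := by
    rintro (j | b)
    · simp [Fin.ext_iff]
    · simp
  have key := le_antisymm (hf.sum_le_two hy fun u hu _ => (hnbr u).2 hu)
    (hf.two_le_sum_s19 hy fun u hu => (hnbr u).1 hu)
  simpa using key

theorem one_le_inl (hℓ : 6 ≤ ℓ) (hf : IsPIDFun (splitGraphS ℓ) f) (i : Fin ℓ) :
    1 ≤ f (inl i) := by
  -- A zero on the clique bounds the clique weight `S` by `2`; then `4` or `5` is a zero, so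
  -- `S = 2`, and a zero among `a, b, c` gives `f x = 0`. Now `x` sees weight `2` on `a, b, c`,
  -- so `f d = 0`, hence `f y = 0`, but the only neighbour of `y` is `d`.
  by_contra! hi
  have hS := sum_inl_le_two hf (Nat.lt_one_iff.1 hi)
  have hmarked := sum_marked_le_sum_inl (f := f) hℓ
  rw [Fin.sum_univ_six] at hmarked
  have hx_zero (k : Fin 6) (hk : k.val ≤ 2) (h : f (marked hℓ k) = 0) :
      ∑ j, f (inl j) + f (inr 0) ≤ 2 :=
    sum_inl_add_le_two hf h (adj_inl_inr.2 (Or.inl ⟨rfl, hk⟩))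
  have hd_zero (h : f (marked hℓ 3) = 0) : ∑ j, f (inl j) + f (inr 1) ≤ 2 :=
    sum_inl_add_le_two hf h (adj_inl_inr.2 (Or.inr ⟨rfl, rfl⟩))
  have he_zero (k : Fin 6) (hk : 4 ≤ k.val) (h : f (marked hℓ k) = 0) : 2 ≤ ∑ j, f (inl j) :=
    two_le_sum_inl hf h hk
  have hx := marked_sum_eq_two_of_inr_zero hℓ hf
  have hy := marked_three_eq_two_of_inr_one hℓ hf
  have := hx_zero 0 (by decide); have := hx_zero 1 (by decide); have := hx_zero 2 (by decide)
  have := he_zero 4 (by decide); have := he_zero 5 (by decide)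
  omega

theorem one_le_inr_zero (hℓ : 6 ≤ ℓ) (hf : IsPIDFun (splitGraphS ℓ) f) : 1 ≤ f (inr 0) := by
  by_contra! hx
  have := marked_sum_eq_two_of_inr_zero hℓ hf (Nat.lt_one_iff.1 hx)
  have := one_le_inl hℓ hf (Fin.castLE hℓ 0)
  have := one_le_inl hℓ hf (Fin.castLE hℓ 1)
  have := one_le_inl hℓ hf (Fin.castLE hℓ 2)
  simp only [marked_apply] at *
  omega

theorem card_le_sum (hℓ : 6 ≤ ℓ) (hf : IsPIDFun (splitGraphS ℓ) f) :
    Fintype.card (Fin ℓ ⊕ Fin 2) ≤ ∑ v, f v := by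
  have hd := one_le_inl hℓ hf (Fin.castLE hℓ 3)
  refine card_le_sum_of_pair (p := inr 1) (q := marked hℓ 3) (by simp) ?_ fun v hvy _ => ?_
  · by_cases hy : f (inr 1) = 0
    · have := marked_three_eq_two_of_inr_one hℓ hf hy
      omega
    · simp only [marked_apply]
      omega
  · rcases v with j | b
    · exact one_le_inl hℓ hf j
    · fin_cases b
      · exact one_le_inr_zero hℓ hf
      · exact absurd rfl hvy

end lowerBound

end splitGraphS

/-- For every `ℓ ≥ 6`, the split graph `S_ℓ` is a connected split graph of order
`n = ℓ + 2` with `pid (S_ℓ) = ℓ + 2 = n`; hence there are connected split graphs of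
arbitrarily large order `n` with perfect Italian domination number `n`. -/
theorem pid_splitGraphS (ℓ : ℕ) (hℓ : 6 ≤ ℓ) :
    (splitGraphS ℓ).Connected ∧
    (∃ K : Set (Fin ℓ ⊕ Fin 2), (splitGraphS ℓ).IsClique K ∧ (splitGraphS ℓ)ᶜ.IsClique Kᶜ) ∧
    Fintype.card (Fin ℓ ⊕ Fin 2) = ℓ + 2 ∧
    pid (splitGraphS ℓ) = ℓ + 2 := by
  have hcard : Fintype.card (Fin ℓ ⊕ Fin 2) = ℓ + 2 := by simp
  refine ⟨splitGraphS.connected (by omega), splitGraphS.isSplit, hcard, ?_⟩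
  rw [← hcard]
  exact le_antisymm (pid_le_card _) (le_pid fun _ hf => splitGraphS.card_le_sum hℓ hf)
end
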